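/- Let d ≥ 1, ε ∈ ℝ, U : ℝ^d → ℝ, and let ρ, S : ℝ × ℝ^d → ℝ with ρ(t,x) > 0 everywhere, both ρ and S continuously differentiable in t and twice continuously differentiable in x. Suppose that at every (t,x): (i) ∂_t ρ = −∇·(ρ ∇S) + ε Δρ (Fokker–Planck equation), and (ii) ∂_t S = −½‖∇S‖² − ε ΔS + U (Hamilton–Jacobi–Bellman equation). Then the Hopf–Cole transform Ŝ := S − ε·log ρ satisfies, at every (t,x), ∂_t Ŝ = −½‖∇Ŝ‖² − ½ε²‖∇(log ∘ ρ)‖² − ε² Δ(log ∘ ρ) + U. -/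

import Mathlib

open scoped RealInnerProductSpace

/-- Gradient of a scalar function on Euclidean space. -/
noncomputable def egrad {d : ℕ} (f : EuclideanSpace ℝ (Fin d) → ℝ)
    (x : EuclideanSpace ℝ (Fin d)) : EuclideanSpace ℝ (Fin d) :=
  gradient f x

/-- Laplacian `Δf = ∑ i, ∂²f/∂x_i²`. -/
noncomputable def elap {d : ℕ} (f : EuclideanSpace ℝ (Fin d) → ℝ)
    (x : EuclideanSpace ℝ (Fin d)) : ℝ :=
  ∑ i, fderiv ℝ (fun y => fderiv ℝ f y (EuclideanSpace.single i (1 : ℝ))) x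
      (EuclideanSpace.single i (1 : ℝ))

/-- Divergence `∇·V = ∑ i, ∂V_i/∂x_i` of a vector field. -/
noncomputable def ediv {d : ℕ} (V : EuclideanSpace ℝ (Fin d) → EuclideanSpace ℝ (Fin d))
    (x : EuclideanSpace ℝ (Fin d)) : ℝ :=
  ∑ i, fderiv ℝ (fun y => V y i) x (EuclideanSpace.single i (1 : ℝ))

/-!
The chain and product rules give `∇ log ρ = ρ⁻¹ ∇ρ`, `Δ log ρ = ρ⁻¹ Δρ - ρ⁻² ‖∇ρ‖²` and
`∇·(ρ ∇S) = ρ ΔS + ⟪∇ρ, ∇S⟫`. Substituting the two equations into `∂ₜŜ = ∂ₜS - ε ρ⁻¹ ∂ₜρ`, the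
`ΔS` terms cancel, and with these identities both sides of the claim reduce to
`-½‖∇S‖² + ε ρ⁻¹ ⟪∇S, ∇ρ⟫ - ε² ρ⁻¹ Δρ + U`.
-/

open scoped Gradient

section Gradient

variable {F : Type*} [NormedAddCommGroup F] [InnerProductSpace ℝ F] [CompleteSpace F]
  {f g : F → ℝ} {x : F}

theorem gradient_sub_const_mul (hf : DifferentiableAt ℝ f x) (hg : DifferentiableAt ℝ g x)
    (c : ℝ) : ∇ (fun y => f y - c * g y) x = ∇ f x - c • ∇ g x := by
  simp [gradient, fderiv_fun_sub hf (hg.const_mul c), fderiv_const_mul hg]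

theorem gradient_log_comp (hf : DifferentiableAt ℝ f x) (hx : f x ≠ 0) :
    ∇ (fun y => Real.log (f y)) x = (f x)⁻¹ • ∇ f x := by
  simp [gradient, fderiv.log hf hx]

end Gradient

section SecondDerivative

variable {E : Type*} [NormedAddCommGroup E] [NormedSpace ℝ E] {f : E → ℝ} {x v : E}

theorem ContDiff.differentiable_fderiv_apply (hf : ContDiff ℝ 2 f) (v : E) :
    Differentiable ℝ (fun y => fderiv ℝ f y v) :=
  ((hf.fderiv_right (by norm_num)).clm_apply contDiff_const).differentiable one_ne_zero

theorem fderiv_fderiv_log_comp_apply (hf : Differentiable ℝ f) (hf0 : ∀ y, f y ≠ 0)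
    (hf' : DifferentiableAt ℝ (fun y => fderiv ℝ f y v) x) :
    fderiv ℝ (fun y => fderiv ℝ (fun z => Real.log (f z)) y v) x v
      = (f x)⁻¹ * fderiv ℝ (fun y => fderiv ℝ f y v) x v - (f x ^ 2)⁻¹ * fderiv ℝ f x v ^ 2 := by
  have hlog : (fun y => fderiv ℝ (fun z => Real.log (f z)) y v)
      = fun y => (f y)⁻¹ * fderiv ℝ f y v := by
    funext y
    simp [fderiv.log (hf y) (hf0 y)]
  have hinv : HasFDerivAt (fun y => (f y)⁻¹) (-(f x ^ 2)⁻¹ • fderiv ℝ f x) x :=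
    (hasDerivAt_inv (hf0 x)).comp_hasFDerivAt x (hf x).hasFDerivAt
  rw [hlog, (hinv.fun_mul hf'.hasFDerivAt).fderiv]
  simp only [add_apply, smul_apply, smul_eq_mul]
  ring

end SecondDerivative

section Euclidean

variable {d : ℕ}

theorem egrad_apply (f : EuclideanSpace ℝ (Fin d) → ℝ) (x : EuclideanSpace ℝ (Fin d))
    (i : Fin d) :
    egrad f x i = fderiv ℝ f x (EuclideanSpace.single i 1) := by
  rw [egrad, ← inner_gradient_left, EuclideanSpace.inner_single_right]
  simp

theorem inner_egrad_eq_sum (f g : EuclideanSpace ℝ (Fin d) → ℝ) (x : EuclideanSpace ℝ (Fin d)) :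
    ⟪egrad f x, egrad g x⟫ = ∑ i, fderiv ℝ f x (EuclideanSpace.single i 1)
      * fderiv ℝ g x (EuclideanSpace.single i 1) := by
  simp [PiLp.inner_apply, egrad_apply, mul_comm]

theorem norm_egrad_sq (f : EuclideanSpace ℝ (Fin d) → ℝ) (x : EuclideanSpace ℝ (Fin d)) :
    ‖egrad f x‖ ^ 2 = ∑ i, fderiv ℝ f x (EuclideanSpace.single i 1) ^ 2 := by
  rw [← real_inner_self_eq_norm_sq, inner_egrad_eq_sum]
  simp only [sq]

theorem elap_log_comp {f : EuclideanSpace ℝ (Fin d) → ℝ} (hf : ContDiff ℝ 2 f)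
    (hf0 : ∀ y, f y ≠ 0) (x : EuclideanSpace ℝ (Fin d)) :
    elap (fun z => Real.log (f z)) x = (f x)⁻¹ * elap f x - (f x ^ 2)⁻¹ * ‖egrad f x‖ ^ 2 := by
  have hfd : Differentiable ℝ f := hf.differentiable two_ne_zero
  simp only [elap, norm_egrad_sq, Finset.mul_sum, ← Finset.sum_sub_distrib,
    fderiv_fderiv_log_comp_apply hfd hf0 (hf.differentiable_fderiv_apply _ x)]

theorem ediv_smul_egrad {f g : EuclideanSpace ℝ (Fin d) → ℝ} {x : EuclideanSpace ℝ (Fin d)}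
    (hf : DifferentiableAt ℝ f x) (hg : ContDiff ℝ 2 g) :
    ediv (fun y => f y • egrad g y) x = f x * elap g x + ⟪egrad f x, egrad g x⟫ := by
  simp only [ediv, elap, inner_egrad_eq_sum, PiLp.smul_apply, smul_eq_mul, egrad_apply,
    fderiv_fun_mul hf (hg.differentiable_fderiv_apply _ x), add_apply, smul_apply, Finset.mul_sum,
    ← Finset.sum_add_distrib]
  exact Finset.sum_congr rfl fun i _ => by ring

end Euclidean

theorem hopf_cole_hjb_general {d : ℕ} (ε : ℝ)
    (U : EuclideanSpace ℝ (Fin d) → ℝ)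
    (ρ S : ℝ → EuclideanSpace ℝ (Fin d) → ℝ)
    (hpos : ∀ t x, 0 < ρ t x)
    (hρt : ∀ x, ContDiff ℝ 1 (fun t => ρ t x))
    (hρx : ∀ t, ContDiff ℝ 2 (ρ t))
    (hSt : ∀ x, ContDiff ℝ 1 (fun t => S t x))
    (hSx : ∀ t, ContDiff ℝ 2 (S t))
    (hFP : ∀ t x, deriv (fun s => ρ s x) t
      = -ediv (fun y => ρ t y • egrad (S t) y) x + ε * elap (ρ t) x)
    (hHJB : ∀ t x, deriv (fun s => S s x) t
      = -(1/2) * ‖egrad (S t) x‖ ^ 2 - ε * elap (S t) x + U x) :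
    ∀ t x, deriv (fun s => S s x - ε * Real.log (ρ s x)) t
      = -(1/2) * ‖egrad (fun z => S t z - ε * Real.log (ρ t z)) x‖ ^ 2
        - (1/2) * ε ^ 2 * ‖egrad (fun z => Real.log (ρ t z)) x‖ ^ 2
        - ε ^ 2 * elap (fun z => Real.log (ρ t z)) x + U x := by
  intro t x
  have hρ0 : ∀ y, ρ t y ≠ 0 := fun y => (hpos t y).ne'
  have hρd : Differentiable ℝ (ρ t) := (hρx t).differentiable two_ne_zero
  have h_dt : deriv (fun s => S s x - ε * Real.log (ρ s x)) t
      = deriv (fun s => S s x) t - ε * (deriv (fun s => ρ s x) t / ρ t x) :=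
    ((hSt x).differentiable one_ne_zero t).hasDerivAt.sub
      ((((hρt x).differentiable one_ne_zero t).hasDerivAt.log (hρ0 x)).const_mul ε) |>.deriv
  have h_grad_log : egrad (fun z => Real.log (ρ t z)) x = (ρ t x)⁻¹ • egrad (ρ t) x :=
    gradient_log_comp (hρd x) (hρ0 x)
  have h_grad_hat : egrad (fun z => S t z - ε * Real.log (ρ t z)) x
      = egrad (S t) x - ε • egrad (fun z => Real.log (ρ t z)) x :=
    gradient_sub_const_mul ((hSx t).differentiable two_ne_zero x) ((hρd x).log (hρ0 x)) ε
  rw [h_dt, hHJB, hFP, ediv_smul_egrad (hρd x) (hSx t), elap_log_comp (hρx t) hρ0, h_grad_hat,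
    h_grad_log, norm_sub_sq_real, norm_smul, norm_smul, inner_smul_right, inner_smul_right,
    real_inner_comm]
  simp only [Real.norm_eq_abs, mul_pow, sq_abs]
  field_simp [hρ0 x]
  ring

/-- Hopf–Cole transform of the Hamilton–Jacobi–Bellman equation.
If `ρ` solves Fokker–Planck and `S` solves `∂ₜS = -½‖∇S‖² - εΔS + U`, then
`Ŝ = S - ε log ρ` solves `∂ₜŜ = -½‖∇Ŝ‖² - ½ε²‖∇log ρ‖² - ε²Δ(log ρ) + U`. -/
theorem hopf_cole_hjb {d : ℕ} (hd : 1 ≤ d) (ε : ℝ)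
    (U : EuclideanSpace ℝ (Fin d) → ℝ)
    (ρ S : ℝ → EuclideanSpace ℝ (Fin d) → ℝ)
    (hpos : ∀ t x, 0 < ρ t x)
    (hρt : ∀ x, ContDiff ℝ 1 (fun t => ρ t x))
    (hρx : ∀ t, ContDiff ℝ 2 (ρ t))
    (hSt : ∀ x, ContDiff ℝ 1 (fun t => S t x))
    (hSx : ∀ t, ContDiff ℝ 2 (S t))
    (hFP : ∀ t x, deriv (fun s => ρ s x) t
      = -ediv (fun y => ρ t y • egrad (S t) y) x + ε * elap (ρ t) x)
    (hHJB : ∀ t x, deriv (fun s => S s x) t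
      = -(1/2) * ‖egrad (S t) x‖ ^ 2 - ε * elap (S t) x + U x) :
    ∀ t x, deriv (fun s => S s x - ε * Real.log (ρ s x)) t
      = -(1/2) * ‖egrad (fun z => S t z - ε * Real.log (ρ t z)) x‖ ^ 2
        - (1/2) * ε ^ 2 * ‖egrad (fun z => Real.log (ρ t z)) x‖ ^ 2
        - ε ^ 2 * elap (fun z => Real.log (ρ t z)) x + U x :=
  hopf_cole_hjb_general ε U ρ S hpos hρt hρx hSt hSx hFP hHJB
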